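/- arXiv:1506.01120 — 4 statements merged into one kernel-verified Lean document; each statement's English description precedes it below -/
import Mathlib

section
/- The number of cyclic subgroups of the abelian group C_{p^n} × C_{p^m} (with p prime and m ≥ n ≥ 1) is p^n(m - n + 1) + 2(p^n - 1)/(p - 1). -/
/-
A cyclic subgroup of order `d` has exactly `φ d` generators, so the number `c d` of cyclic
subgroups of order `d` satisfies `c d * φ d = #{g | orderOf g = d}`. In `C_{p^n} × C_{p^m}` the
equation `g ^ p ^ k = 1` has `p ^ min n k * p ^ min m k` solutions, hence there are
`p ^ (2k) * (p ^ 2 - 1)` elements of order `p ^ (k + 1)` when `k < n` and `p ^ (n + k) * (p - 1)`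
when `n ≤ k < m`. Dividing by `φ (p ^ (k + 1)) = p ^ k * (p - 1)` gives
`c (p ^ (k + 1)) = p ^ k * (p + 1)`, resp. `p ^ n`, and summing these together with `c 1 = 1`
over the divisors of the exponent `p ^ m` yields the formula, since `(p ^ n - 1) / (p - 1)` is
the geometric sum `∑ i < n, p ^ i`.
-/

open Finset Subgroup

theorem Nat.gcd_pow_pow (p a b : ℕ) : (p ^ a).gcd (p ^ b) = p ^ min a b := by
  rcases le_total a b with h | h
  · rw [Nat.gcd_eq_left (pow_dvd_pow p h), min_eq_left h]
  · rw [Nat.gcd_eq_right (pow_dvd_pow p h), min_eq_right h]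

theorem geom_sum_mul_succ_add_one {R : Type*} [CommSemiring R] (x : R) (n : ℕ) :
    (∑ i ∈ range n, x ^ i) * (x + 1) + 1 = x ^ n + 2 * ∑ i ∈ range n, x ^ i := by
  induction n with
  | zero => simp
  | succ n ih =>
    rw [sum_range_succ, add_mul, add_right_comm, ih]
    ring

section CyclicSubgroups

variable {G : Type*} [Group G]

variable (G) in
noncomputable def numCyclicSubgroupsOfCard (d : ℕ) : ℕ :=
  Nat.card {S : Subgroup G // (∃ g, S = zpowers g) ∧ Nat.card S = d}

theorem card_generators_zpowers [Finite G] (g : G) :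
    Nat.card {x : G // zpowers x = zpowers g} = (orderOf g).totient := by
  let e : {x : G // zpowers x = zpowers g} ≃ {y : zpowers g // orderOf y = orderOf g} :=
    { toFun := fun x => ⟨⟨x, x.2.le (mem_zpowers x.1)⟩, by
        rw [orderOf_mk, ← Nat.card_zpowers, x.2, Nat.card_zpowers]⟩
      invFun := fun y => ⟨y.1, eq_of_le_of_card_ge (zpowers_le.mpr y.1.2)
        (by rw [Nat.card_zpowers, Nat.card_zpowers, orderOf_coe, y.2])⟩
      left_inv := fun _ => rfl
      right_inv := fun _ => rfl }
  classical
  have := Fintype.ofFinite (zpowers g)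
  rw [Nat.card_congr e, Nat.card_eq_fintype_card, Fintype.card_subtype,
    IsCyclic.card_orderOf_eq_totient (by rw [← Nat.card_eq_fintype_card, Nat.card_zpowers])]

theorem ncard_orderOf_eq_mul_totient [Finite G] (d : ℕ) :
    {g : G | orderOf g = d}.ncard = numCyclicSubgroupsOfCard G d * d.totient := by
  let f : {g : G // orderOf g = d} →
      {S : Subgroup G // (∃ g, S = zpowers g) ∧ Nat.card S = d} := fun g =>
    ⟨zpowers g, ⟨g, rfl⟩, by rw [Nat.card_zpowers, g.2]⟩
  have card_fiber : ∀ S, Nat.card {g // f g = S} = d.totient := by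
    rintro ⟨_, ⟨g, rfl⟩, hg⟩
    have hgd : orderOf g = d := Nat.card_zpowers (a := g) ▸ hg
    refine (Nat.card_congr (β := {x : G // zpowers x = zpowers g})
      { toFun := fun x => ⟨x.1, congrArg Subtype.val x.2⟩
        invFun := fun x => ⟨⟨x, by rw [← Nat.card_zpowers, x.2, hg]⟩, Subtype.ext x.2⟩
        left_inv := fun _ => rfl
        right_inv := fun _ => rfl }).trans ?_
    rw [card_generators_zpowers, hgd]
  classical
  have := Fintype.ofFinite {S : Subgroup G // (∃ g, S = zpowers g) ∧ Nat.card S = d}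
  change Nat.card {g : G // orderOf g = d} = _
  rw [← Nat.card_congr (Equiv.sigmaFiberEquiv f), Nat.card_sigma,
    sum_congr rfl fun S _ => card_fiber S, sum_const, card_univ, smul_eq_mul,
    numCyclicSubgroupsOfCard, Nat.card_eq_fintype_card]

theorem numCyclicSubgroupsOfCard_one [Finite G] : numCyclicSubgroupsOfCard G 1 = 1 := by
  have h := ncard_orderOf_eq_mul_totient (G := G) 1
  simpa [orderOf_eq_one_iff] using h.symm

theorem card_cyclicSubgroups_eq_sum_divisors [Finite G] {N : ℕ} (hN : N ≠ 0)
    (hG : ∀ g : G, g ^ N = 1) :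
    Nat.card {S : Subgroup G // ∃ g, S = zpowers g} =
      ∑ d ∈ N.divisors, numCyclicSubgroupsOfCard G d := by
  let f : {S : Subgroup G // ∃ g, S = zpowers g} → N.divisors := fun S =>
    ⟨Nat.card S, by
      obtain ⟨_, g, rfl⟩ := S
      rw [Nat.mem_divisors, Nat.card_zpowers]
      exact ⟨orderOf_dvd_of_pow_eq_one (hG g), hN⟩⟩
  rw [← Nat.card_congr (Equiv.sigmaFiberEquiv f), Nat.card_sigma,
    ← sum_coe_sort N.divisors]
  exact Fintype.sum_congr _ _ fun d => Nat.card_congr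
    { toFun := fun S => ⟨S.1, S.1.2, congrArg Subtype.val S.2⟩
      invFun := fun S => ⟨⟨S.1, S.2.1⟩, Subtype.ext S.2.2⟩
      left_inv := fun _ => rfl
      right_inv := fun _ => rfl }

theorem ncard_orderOf_eq_prime_pow_succ_add [Finite G] {p : ℕ} [hp : Fact p.Prime] (k : ℕ) :
    {g : G | orderOf g = p ^ (k + 1)}.ncard + {g : G | g ^ p ^ k = 1}.ncard =
      {g : G | g ^ p ^ (k + 1) = 1}.ncard := by
  have hsub : {g : G | g ^ p ^ k = 1} ⊆ {g : G | g ^ p ^ (k + 1) = 1} :=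
    fun g (hg : g ^ p ^ k = 1) => show g ^ p ^ (k + 1) = 1 by rw [pow_succ, pow_mul, hg, one_pow]
  have hdiff : {g : G | orderOf g = p ^ (k + 1)} =
      {g : G | g ^ p ^ (k + 1) = 1} \ {g : G | g ^ p ^ k = 1} := by
    ext g
    refine ⟨fun h => ⟨h ▸ pow_orderOf_eq_one g, fun hk => ?_⟩,
      fun h => orderOf_eq_prime_pow h.2 h.1⟩
    have hdvd := (Nat.pow_dvd_pow_iff_le_right hp.out.one_lt).mp
      (h ▸ orderOf_dvd_of_pow_eq_one hk)
    omega
  rw [hdiff, Set.ncard_sdiff_add_ncard_of_subset hsub]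

theorem numCyclicSubgroupsOfCard_prime_pow_succ_mul_add [Finite G] {p : ℕ} [hp : Fact p.Prime]
    (k : ℕ) :
    numCyclicSubgroupsOfCard G (p ^ (k + 1)) * (p ^ k * (p - 1)) +
        {g : G | g ^ p ^ k = 1}.ncard =
      {g : G | g ^ p ^ (k + 1) = 1}.ncard := by
  rw [← Nat.totient_prime_pow_succ hp.out, ← ncard_orderOf_eq_mul_totient,
    ncard_orderOf_eq_prime_pow_succ_add]

end CyclicSubgroups

theorem pow_eq_one_zmod_prod {A B N : ℕ} (hA : A ∣ N) (hB : B ∣ N)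
    (g : Multiplicative (ZMod A × ZMod B)) : g ^ N = 1 := by
  change N • g.toAdd = 0
  ext
  · simp [nsmul_eq_mul, (ZMod.natCast_eq_zero_iff N A).mpr hA]
  · simp [nsmul_eq_mul, (ZMod.natCast_eq_zero_iff N B).mpr hB]

theorem ncard_pow_eq_one_zmod_prod (A B N : ℕ) [NeZero A] [NeZero B] :
    {g : Multiplicative (ZMod A × ZMod B) | g ^ N = 1}.ncard = A.gcd N * B.gcd N := by
  have ncard_zmod : ∀ C [NeZero C], {a : ZMod C | N • a = 0}.ncard = C.gcd N := fun C _ => by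
    have := IsAddCyclic.card_nsmulAddMonoidHom_ker (ZMod C) N
    rw [Nat.card_zmod, ← SetLike.coe_sort_coe, Nat.card_coe_set_eq] at this
    exact this
  change {x : ZMod A × ZMod B | N • x = 0}.ncard = _
  rw [← ncard_zmod A, ← ncard_zmod B, ← Set.ncard_prod]
  congr 1
  ext
  simp [Prod.ext_iff]

section ZModProd

variable {p n m : ℕ} [hp : Fact p.Prime]

theorem ncard_pow_prime_pow_eq_one_zmod_prod (k : ℕ) :
    {g : Multiplicative (ZMod (p ^ n) × ZMod (p ^ m)) | g ^ p ^ k = 1}.ncard =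
      p ^ min n k * p ^ min m k := by
  rw [ncard_pow_eq_one_zmod_prod, Nat.gcd_pow_pow, Nat.gcd_pow_pow]

theorem numCyclicSubgroupsOfCard_zmod_prod_eq_of_mul_add {k t : ℕ} (hkm : k < m)
    (ht : t * (p ^ k * (p - 1)) + p ^ min n k * p ^ k = p ^ min n (k + 1) * p ^ (k + 1)) :
    numCyclicSubgroupsOfCard (Multiplicative (ZMod (p ^ n) × ZMod (p ^ m))) (p ^ (k + 1)) = t := by
  have h := numCyclicSubgroupsOfCard_prime_pow_succ_mul_add
    (G := Multiplicative (ZMod (p ^ n) × ZMod (p ^ m))) (p := p) k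
  rw [ncard_pow_prime_pow_eq_one_zmod_prod, ncard_pow_prime_pow_eq_one_zmod_prod,
    min_eq_right hkm.le, min_eq_right (Nat.add_one_le_of_lt hkm)] at h
  exact Nat.eq_of_mul_eq_mul_right (Nat.mul_pos (pow_pos hp.out.pos k)
    (Nat.sub_pos_of_lt hp.out.one_lt)) (Nat.add_right_cancel (h.trans ht.symm))

theorem numCyclicSubgroupsOfCard_zmod_prod_of_lt {k : ℕ} (hkn : k < n) (hnm : n ≤ m) :
    numCyclicSubgroupsOfCard (Multiplicative (ZMod (p ^ n) × ZMod (p ^ m))) (p ^ (k + 1)) =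
      p ^ k * (p + 1) := by
  refine numCyclicSubgroupsOfCard_zmod_prod_eq_of_mul_add (by omega) ?_
  rw [min_eq_right hkn.le, min_eq_right (Nat.add_one_le_of_lt hkn)]
  obtain ⟨q, rfl⟩ : ∃ q, p = q + 1 := ⟨p - 1, by have := hp.out.one_lt; omega⟩
  simp only [Nat.add_sub_cancel]
  ring

theorem numCyclicSubgroupsOfCard_zmod_prod_of_le {k : ℕ} (hnk : n ≤ k) (hkm : k < m) :
    numCyclicSubgroupsOfCard (Multiplicative (ZMod (p ^ n) × ZMod (p ^ m))) (p ^ (k + 1)) =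
      p ^ n := by
  refine numCyclicSubgroupsOfCard_zmod_prod_eq_of_mul_add hkm ?_
  rw [min_eq_left hnk, min_eq_left (by omega : n ≤ k + 1)]
  obtain ⟨q, rfl⟩ : ∃ q, p = q + 1 := ⟨p - 1, by have := hp.out.one_lt; omega⟩
  simp only [Nat.add_sub_cancel]
  ring

end ZModProd

theorem numCyclicSubgroups_general (p n m : ℕ) (hp : p.Prime) (hnm : n ≤ m) :
    Nat.card {S : Subgroup (Multiplicative (ZMod (p ^ n) × ZMod (p ^ m))) //
        ∃ g, S = Subgroup.zpowers g} =
      p ^ n * (m - n + 1) + 2 * ((p ^ n - 1) / (p - 1)) := by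
  have := Fact.mk hp
  rw [card_cyclicSubgroups_eq_sum_divisors (pow_ne_zero m hp.ne_zero)
      (pow_eq_one_zmod_prod (pow_dvd_pow p hnm) dvd_rfl),
    Nat.divisors_prime_pow hp, sum_map, sum_range_succ', ← sum_range_add_sum_Ico _ hnm]
  simp only [Function.Embedding.coeFn_mk, pow_zero, numCyclicSubgroupsOfCard_one]
  rw [sum_congr rfl fun k hk => numCyclicSubgroupsOfCard_zmod_prod_of_lt (mem_range.mp hk) hnm,
    sum_congr rfl fun k hk =>
      numCyclicSubgroupsOfCard_zmod_prod_of_le (mem_Ico.mp hk).1 (mem_Ico.mp hk).2,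
    ← Nat.geomSum_eq hp.two_le, sum_const, Nat.card_Ico, smul_eq_mul, ← sum_mul]
  linear_combination geom_sum_mul_succ_add_one p n

theorem numCyclicSubgroups (p n m : ℕ) (hp : p.Prime) (hn : 1 ≤ n) (hnm : n ≤ m) :
    Nat.card {S : Subgroup (Multiplicative (ZMod (p ^ n) × ZMod (p ^ m))) //
        ∃ g, S = Subgroup.zpowers g} =
      p ^ n * (m - n + 1) + 2 * ((p ^ n - 1) / (p - 1)) :=
  numCyclicSubgroups_general p n m hp hnm
end

section
/- The number of subgroups S of C_{p^n} × C_{p^n} such that the quotient (C_{p^n} × C_{p^n})/S is cyclic equals p^n + 2(p^n - 1)/(p - 1). -/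
/-!
A subgroup `T` of `G = (ℤ/p^n)²` with cyclic quotient is the kernel of a surjection
`G → ℤ/p^k` with `k ≤ n`, i.e. of a form `(x, y) ↦ c x + d y` in which `c` or `d` is a unit, and
forms differing by a unit factor have the same kernel. Normalising the unit coefficient to `1`
identifies these `T` with the points `(1 : b)` and `(a : 1)`, `a` a non-unit, of the projective
line over `ℤ/p^k`; there are `2 p^k - φ(p^k)` of them, and `∑_{k ≤ n} φ(p^k) = p^n`.
-/

theorem isCyclic_quotient_toSubgroup_iff {A : Type*} [AddCommGroup A] (T : AddSubgroup A) :
    IsCyclic (Multiplicative A ⧸ T.toSubgroup) ↔ IsAddCyclic (A ⧸ T) := by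
  let π := AddMonoidHom.toMultiplicative (QuotientAddGroup.mk' T)
  have hker : π.ker = T.toSubgroup := by
    ext x
    simp [π]
  rw [← isCyclic_multiplicative_iff, ((QuotientGroup.quotientMulEquivOfEq hker.symm).trans
    (QuotientGroup.quotientKerEquivOfSurjective π (QuotientAddGroup.mk'_surjective T))).isCyclic]

theorem exists_surjective_zmod_ker_eq {A : Type*} [AddCommGroup A] {T : AddSubgroup A}
    (hT : IsAddCyclic (A ⧸ T)) :
    ∃ (m : ℕ) (ψ : A →+ ZMod m), Function.Surjective ψ ∧ ψ.ker = T := by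
  let e := (zmodAddCyclicAddEquiv hT).symm
  refine ⟨_, e.toAddMonoidHom.comp (QuotientAddGroup.mk' T),
    e.surjective.comp (QuotientAddGroup.mk'_surjective T), ?_⟩
  ext x
  simp

theorem dvd_of_surjective_zmod {A : Type*} [AddCommGroup A] {N m : ℕ} {ψ : A →+ ZMod m}
    (hψ : Function.Surjective ψ) (hN : ∀ a : A, N • a = 0) : m ∣ N := by
  obtain ⟨a, ha⟩ := hψ 1
  rw [← ZMod.natCast_eq_zero_iff, ← nsmul_one, ← ha, ← map_nsmul, hN, map_zero]

namespace ZMod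

variable {p k : ℕ}

theorem exists_eq_prime_mul_of_not_isUnit (hp : p.Prime) (hk : 0 < k) {c : ZMod (p ^ k)}
    (hc : ¬IsUnit c) : ∃ c', c = p * c' := by
  have : NeZero (p ^ k) := ⟨pow_ne_zero _ hp.ne_zero⟩
  rw [← natCast_zmod_val c, isUnit_natCast_iff_not_dvd_pow hp hk, not_not] at hc
  obtain ⟨t, ht⟩ := hc
  exact ⟨t, by rw [← natCast_zmod_val c, ht, Nat.cast_mul]⟩

theorem isUnit_or_isUnit_of_mul_add_mul_eq_one (hp : p.Prime) {c d x y : ZMod (p ^ k)}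
    (h : c * x + d * y = 1) : IsUnit c ∨ IsUnit d := by
  rcases Nat.eq_zero_or_pos k with rfl | hk
  · exact Or.inl (isUnit_of_subsingleton (M := ZMod 1) c)
  by_contra! hcd
  obtain ⟨c', rfl⟩ := exists_eq_prime_mul_of_not_isUnit hp hk hcd.1
  obtain ⟨d', rfl⟩ := exists_eq_prime_mul_of_not_isUnit hp hk hcd.2
  exact prime_natCast_not_isUnit_pow hp hk
    (IsUnit.of_mul_eq_one (c' * x + d' * y) (by rw [← h]; ring))

variable {m N : ℕ}

def linForm (h : m ∣ N) (c d : ZMod m) : ZMod N × ZMod N →+ ZMod m :=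
  ((AddMonoidHom.mulLeft c).comp (castHom h (ZMod m)).toAddMonoidHom).coprod
    ((AddMonoidHom.mulLeft d).comp (castHom h (ZMod m)).toAddMonoidHom)

variable (h : m ∣ N)

@[simp]
theorem linForm_apply (c d : ZMod m) (z : ZMod N × ZMod N) :
    linForm h c d z = c * castHom h (ZMod m) z.1 + d * castHom h (ZMod m) z.2 :=
  rfl

theorem eq_linForm (ψ : ZMod N × ZMod N →+ ZMod m) : ψ = linForm h (ψ (1, 0)) (ψ (0, 1)) := by
  ext ⟨x, y⟩
  have hxy : ((x, y) : ZMod N × ZMod N) = (cast x : ℤ) • (1, 0) + (cast y : ℤ) • (0, 1) := by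
    ext <;> simp
  rw [hxy, map_add, map_zsmul, map_zsmul]
  simp [intCast_cast, mul_comm]

theorem linForm_surjective {c d : ZMod m} (hcd : IsUnit c ∨ IsUnit d) :
    Function.Surjective (linForm h c d) := by
  intro z
  rcases hcd with ⟨u, rfl⟩ | ⟨u, rfl⟩
  · obtain ⟨w, hw⟩ := castHom_surjective h (↑u⁻¹ * z)
    exact ⟨(w, 0), by simp [hw]⟩
  · obtain ⟨w, hw⟩ := castHom_surjective h (↑u⁻¹ * z)
    exact ⟨(0, w), by simp [hw]⟩

theorem isUnit_or_isUnit_of_linForm_surjective (hp : p.Prime) (hpk : p ^ k ∣ N)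
    {c d : ZMod (p ^ k)} (hψ : Function.Surjective (linForm hpk c d)) : IsUnit c ∨ IsUnit d :=
  have ⟨_, hz⟩ := hψ 1
  isUnit_or_isUnit_of_mul_add_mul_eq_one hp hz

theorem mul_eq_mul_of_ker_linForm_le {c d c' d' : ZMod m}
    (hle : (linForm h c d).ker ≤ (linForm h c' d').ker) : c * d' = c' * d := by
  obtain ⟨x, hx⟩ := castHom_surjective h c
  obtain ⟨y, hy⟩ := castHom_surjective h d
  have hmem : ((-y, x) : ZMod N × ZMod N) ∈ (linForm h c d).ker := by
    simp only [AddMonoidHom.mem_ker, linForm_apply, map_neg, hx, hy]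
    ring
  have := hle hmem
  simp only [AddMonoidHom.mem_ker, linForm_apply, map_neg, hx, hy] at this
  linear_combination this

theorem ker_linForm_units_mul (u : (ZMod m)ˣ) (c d : ZMod m) :
    (linForm h (u * c) (u * d)).ker = (linForm h c d).ker := by
  ext z
  simp [mul_assoc, ← mul_add]

/-- For `m` a prime power, representatives `(1 : b)` and `(a : 1)`, `a` a non-unit, of the points
of the projective line over `ZMod m`. -/
abbrev ProjLine (m : ℕ) : Type := ZMod m ⊕ {a : ZMod m // ¬IsUnit a}

def projLineForm : ProjLine m → ZMod N × ZMod N →+ ZMod m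
  | .inl b => linForm h 1 b
  | .inr a => linForm h a 1

theorem projLineForm_surjective (x : ProjLine m) : Function.Surjective (projLineForm h x) := by
  rcases x with b | a
  · exact linForm_surjective h (Or.inl isUnit_one)
  · exact linForm_surjective h (Or.inr isUnit_one)

theorem ker_projLineForm_injective :
    Function.Injective fun x : ProjLine m ↦ (projLineForm h x).ker := by
  rintro (b | ⟨a, ha⟩) (b' | ⟨a', ha'⟩) hx <;>
    have hmul := mul_eq_mul_of_ker_linForm_le h hx.le
  · simpa using hmul.symm
  · exact absurd (IsUnit.of_mul_eq_one b (by simpa using hmul.symm)) ha'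
  · exact absurd (IsUnit.of_mul_eq_one b' (by simpa using hmul)) ha
  · simpa using hmul

theorem exists_ker_projLineForm_eq (hp : p.Prime) (hpk : p ^ k ∣ N) {c d : ZMod (p ^ k)}
    (hψ : Function.Surjective (linForm hpk c d)) :
    ∃ x, (projLineForm hpk x).ker = (linForm hpk c d).ker := by
  by_cases hc : IsUnit c
  · obtain ⟨u, rfl⟩ := hc
    refine ⟨.inl (↑u⁻¹ * d), ?_⟩
    rw [← ker_linForm_units_mul hpk u⁻¹ u d]
    simp [projLineForm]
  · obtain ⟨u, rfl⟩ := (isUnit_or_isUnit_of_linForm_surjective hp hpk hψ).resolve_left hc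
    refine ⟨.inr ⟨↑u⁻¹ * c, by simpa using hc⟩, ?_⟩
    rw [← ker_linForm_units_mul hpk u⁻¹ c u]
    simp [projLineForm]

theorem card_projLine_add_totient (m : ℕ) [NeZero m] :
    Nat.card (ProjLine m) + Nat.totient m = 2 * m := by
  have hunits : Nat.card {a : ZMod m // IsUnit a} = Nat.totient m := by
    rw [← card_units_eq_totient, ← Nat.card_eq_fintype_card]
    exact (Nat.card_congr ((Submonoid.unitsTypeEquivIsUnitSubmonoid (M := ZMod m)).toEquiv.trans
      (Equiv.subtypeEquivRight fun _ ↦ IsUnit.mem_submonoid_iff _))).symm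
  have hsplit := Nat.card_congr (Equiv.sumCompl fun a : ZMod m ↦ IsUnit a)
  rw [Nat.card_sum, Nat.card_zmod] at hsplit
  rw [Nat.card_sum, Nat.card_zmod, ← hunits]
  omega

end ZMod

theorem AddSubgroup.index_ker_of_surjective {A B : Type*} [AddGroup A] [AddGroup B]
    {ψ : A →+ B} (hψ : Function.Surjective ψ) : ψ.ker.index = Nat.card B := by
  rw [AddSubgroup.index_ker, AddMonoidHom.range_eq_top.mpr hψ, AddSubgroup.card_top]

theorem isAddCyclic_quotient_ker {A : Type*} [AddGroup A] {m : ℕ} {ψ : A →+ ZMod m}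
    (hψ : Function.Surjective ψ) : IsAddCyclic (A ⧸ ψ.ker) :=
  isAddCyclic_of_surjective _ (QuotientAddGroup.quotientKerEquivOfSurjective ψ hψ).symm.surjective

section

variable (p n : ℕ)

def kerOfProjLine (x : Σ k : Fin (n + 1), ZMod.ProjLine (p ^ (k : ℕ))) :
    {T : AddSubgroup (ZMod (p ^ n) × ZMod (p ^ n)) // IsAddCyclic (_ ⧸ T)} :=
  ⟨_, isAddCyclic_quotient_ker (ZMod.projLineForm_surjective (pow_dvd_pow p x.1.is_le) x.2)⟩

variable {p n}

theorem kerOfProjLine_bijective (hp : p.Prime) : Function.Bijective (kerOfProjLine p n) := by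
  constructor
  · rintro ⟨k, x⟩ ⟨k', x'⟩ hkx
    have hT : (ZMod.projLineForm (pow_dvd_pow p k.is_le) x).ker =
        (ZMod.projLineForm (pow_dvd_pow p k'.is_le) x').ker := congrArg Subtype.val hkx
    obtain rfl : k = k' := by
      have := congrArg AddSubgroup.index hT
      rw [AddSubgroup.index_ker_of_surjective (ZMod.projLineForm_surjective _ x),
        AddSubgroup.index_ker_of_surjective (ZMod.projLineForm_surjective _ x'),
        Nat.card_zmod, Nat.card_zmod] at this
      exact Fin.ext (Nat.pow_right_injective hp.two_le this)
    rw [ZMod.ker_projLineForm_injective _ hT]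
  · rintro ⟨T, hT⟩
    obtain ⟨m, ψ, hψ, rfl⟩ := exists_surjective_zmod_ker_eq hT
    obtain ⟨k, hk, rfl⟩ := (Nat.dvd_prime_pow hp).mp
      (dvd_of_surjective_zmod (N := p ^ n) hψ fun a ↦ by
        rw [← Nat.cast_smul_eq_nsmul (ZMod (p ^ n)), ZMod.natCast_self, zero_smul])
    have hψ_eq := ZMod.eq_linForm (pow_dvd_pow p hk) ψ
    rw [hψ_eq] at hψ
    obtain ⟨x, hx⟩ := ZMod.exists_ker_projLineForm_eq hp _ hψ
    exact ⟨⟨⟨k, by omega⟩, x⟩, Subtype.ext (hx.trans (congrArg _ hψ_eq.symm))⟩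

theorem card_sigma_projLine_add_pow (hp : p.Prime) :
    Nat.card (Σ k : Fin (n + 1), ZMod.ProjLine (p ^ (k : ℕ))) + p ^ n =
      2 * ∑ k ∈ Finset.range (n + 1), p ^ k := by
  have : NeZero p := ⟨hp.ne_zero⟩
  rw [Nat.card_sigma, ← Nat.sum_totient (p ^ n), Nat.divisors_prime_pow hp, Finset.sum_map,
    Fin.sum_univ_eq_sum_range (fun k ↦ Nat.card (ZMod.ProjLine (p ^ k))),
    ← Finset.sum_add_distrib, Finset.mul_sum]
  exact Finset.sum_congr rfl fun k _ ↦ ZMod.card_projLine_add_totient (p ^ k)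

end

theorem numCyclicQuotientSubgroups_general (p n : ℕ) (hp : p.Prime) :
    Nat.card {S : Subgroup (Multiplicative (ZMod (p ^ n) × ZMod (p ^ n))) //
        IsCyclic (Multiplicative (ZMod (p ^ n) × ZMod (p ^ n)) ⧸ S)} =
      p ^ n + 2 * ((p ^ n - 1) / (p - 1)) := by
  have hcard := card_sigma_projLine_add_pow (n := n) hp
  rw [Finset.sum_range_succ, Nat.geomSum_eq hp.two_le] at hcard
  rw [← Nat.card_congr (Equiv.subtypeEquiv AddSubgroup.toSubgroup.toEquiv
      fun T ↦ (isCyclic_quotient_toSubgroup_iff T).symm),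
    ← Nat.card_eq_of_bijective _ (kerOfProjLine_bijective hp)]
  omega

theorem numCyclicQuotientSubgroups (p n : ℕ) (hp : p.Prime) (hn : 1 ≤ n) :
    Nat.card {S : Subgroup (Multiplicative (ZMod (p ^ n) × ZMod (p ^ n))) //
        IsCyclic (Multiplicative (ZMod (p ^ n) × ZMod (p ^ n)) ⧸ S)} =
      p ^ n + 2 * ((p ^ n - 1) / (p - 1)) :=
  numCyclicQuotientSubgroups_general p n hp
end

section
/- Let P = C_{p^n} × C_{p^n} with generators a and b. Every subgroup of P with cyclic quotient of index p^s (for 1 ≤ s ≤ n) is of the form ⟨a^ν b, a^{p^s}⟩ for some 0 ≤ ν < p^s, or of the form ⟨a b^μ, b^{p^s}⟩ for some 0 ≤ μ < p^s with p dividing μ. -/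
/-! The cyclic quotient `P ⧸ S` of order `p ^ s` is identified with `ZMod (p ^ s)`, which gives a
surjection `φ : P → ZMod (p ^ s)` with kernel `S`. Since `ZMod (p ^ s)` is a local ring and `φ a`,
`φ b` generate it, one of them is a unit. If `φ a` is a unit, pick `ν` with `ν φ(a) + φ(b) = 0`:
then `a ^ ν b` and `a ^ (p ^ s)` lie in `S`, and together with `a` they generate `P`, so the
subgroup they generate has index dividing `p ^ s` and hence equals `S`. Otherwise `φ b` is a unit,
and the same argument applies to `μ = -φ(a) / φ(b)`, which is a non-unit, i.e. divisible by `p`. -/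

open Subgroup

theorem ZMod.isLocalRing_prime_pow {p s : ℕ} (hp : p.Prime) (hs : s ≠ 0) :
    IsLocalRing (ZMod (p ^ s)) :=
  haveI := Fact.mk hp
  haveI : Fact (1 < p ^ s) := ⟨Nat.one_lt_pow hs hp.one_lt⟩
  IsLocalRing.of_surjective' (PadicInt.toZModPow s) (ZMod.ringHom_surjective _)

theorem ZMod.not_isUnit_iff_dvd_val {p s : ℕ} (hp : p.Prime) (hs : s ≠ 0) (x : ZMod (p ^ s)) :
    ¬IsUnit x ↔ p ∣ x.val := by
  have : NeZero (p ^ s) := ⟨pow_ne_zero s hp.ne_zero⟩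
  have h := ZMod.isUnit_iff_coprime x.val (p ^ s)
  rw [ZMod.natCast_zmod_val] at h
  rw [h, Nat.coprime_pow_right_iff (Nat.pos_of_ne_zero hs), Nat.coprime_comm,
    hp.coprime_iff_not_dvd, not_not]

theorem closure_ofAdd_one_zero_zero_one_eq_top (N : ℕ) :
    Subgroup.closure {Multiplicative.ofAdd ((1 : ZMod N), (0 : ZMod N)),
      Multiplicative.ofAdd ((0 : ZMod N), (1 : ZMod N))} = ⊤ := by
  refine eq_top_iff.2 fun x _ => ?_
  have hx : x = Multiplicative.ofAdd ((1 : ZMod N), (0 : ZMod N)) ^ (x.toAdd.1.cast : ℤ) *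
      Multiplicative.ofAdd ((0 : ZMod N), (1 : ZMod N)) ^ (x.toAdd.2.cast : ℤ) := by
    apply Multiplicative.toAdd.injective
    ext <;> simp
  rw [hx]
  exact mul_mem (zpow_mem (subset_closure (by simp)) _) (zpow_mem (subset_closure (by simp)) _)

section

variable {G : Type*}

theorem Subgroup.index_dvd_of_sup_zpowers_eq_top [Group G] {K : Subgroup G} [K.Normal] {g : G}
    (hgen : K ⊔ zpowers g = ⊤) {m : ℕ} (hg : g ^ m ∈ K) : K.index ∣ m := by
  have htop : zpowers (g : G ⧸ K) = ⊤ := by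
    calc zpowers (g : G ⧸ K) = (K ⊔ zpowers g).map (QuotientGroup.mk' K) := by
          rw [map_sup, QuotientGroup.map_mk'_self, bot_sup_eq, MonoidHom.map_zpowers]; rfl
      _ = ⊤ := by rw [hgen, ← MonoidHom.range_eq_map, QuotientGroup.range_mk']
  rw [index_eq_card, ← card_top, ← htop, Nat.card_zpowers]
  refine orderOf_dvd_of_pow_eq_one ?_
  rw [← QuotientGroup.mk_pow, QuotientGroup.eq_one_iff]
  exact hg

theorem Subgroup.eq_closure_pow_mul_of_mem [CommGroup G] {S : Subgroup G} {a b : G}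
    (hab : closure {a, b} = ⊤) {m : ℕ} (hidx : S.index = m) (hm : m ≠ 0) {ν : ℕ}
    (hν : a ^ ν * b ∈ S) : S = closure {a ^ ν * b, a ^ m} := by
  subst hidx
  set K := closure {a ^ ν * b, a ^ S.index}
  have hKS : K ≤ S :=
    (closure_le _).2 (Set.insert_subset_iff.2 ⟨hν, Set.singleton_subset_iff.2 (S.pow_index_mem a)⟩)
  have hgen : K ⊔ zpowers a = ⊤ := by
    have ha : a ∈ K ⊔ zpowers a := mem_sup_right (mem_zpowers a)
    rw [eq_top_iff, ← hab, closure_le, Set.insert_subset_iff, Set.singleton_subset_iff]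
    refine ⟨ha, ?_⟩
    rw [show b = (a ^ ν)⁻¹ * (a ^ ν * b) by group]
    exact mul_mem (inv_mem (pow_mem ha ν)) (mem_sup_left (subset_closure (Set.mem_insert _ _)))
  have hdvd : K.index ∣ S.index := index_dvd_of_sup_zpowers_eq_top hgen (subset_closure (by simp))
  have hrel : K.relIndex S * S.index = 1 * S.index := by
    rw [relIndex_mul_index hKS, one_mul]
    exact Nat.dvd_antisymm hdvd (index_dvd_of_le hKS)
  exact le_antisymm
    (relIndex_eq_one.1 (Nat.eq_of_mul_eq_mul_right (Nat.pos_of_ne_zero hm) hrel)) hKS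

theorem exists_surjective_ker_eq_of_isCyclic [Group G] (S : Subgroup G) [S.Normal]
    (hcyc : IsCyclic (G ⧸ S)) {m : ℕ} (hidx : S.index = m) :
    ∃ φ : G →* Multiplicative (ZMod m), Function.Surjective φ ∧ φ.ker = S := by
  rw [index_eq_card] at hidx
  subst hidx
  refine ⟨((zmodCyclicMulEquiv hcyc).symm : G ⧸ S →* _).comp (QuotientGroup.mk' S), ?_, ?_⟩
  · exact (zmodCyclicMulEquiv hcyc).symm.surjective.comp (QuotientGroup.mk'_surjective S)
  · rw [MonoidHom.ker_mulEquiv_comp, QuotientGroup.ker_mk']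

theorem exists_isUnit_toAdd_of_closure_eq_top [Group G] {R : Type*} [CommRing R] [IsLocalRing R]
    {φ : G →* Multiplicative R} (hφ : Function.Surjective φ) {T : Set G} (hT : closure T = ⊤) :
    ∃ g ∈ T, IsUnit (φ g).toAdd := by
  by_contra! h
  let M := (AddSubgroup.toSubgroup (IsLocalRing.maximalIdeal R).toAddSubgroup).comap φ
  have hTM : closure T ≤ M :=
    (closure_le _).2 fun g hg => (IsLocalRing.mem_maximalIdeal _).2 (h g hg)
  obtain ⟨x, hx⟩ := hφ (Multiplicative.ofAdd 1)
  have h1 : (φ x).toAdd ∈ IsLocalRing.maximalIdeal R := hTM (hT ▸ mem_top x)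
  exact h1 (by simp [hx])

theorem pow_val_mul_mem_ker_iff [Group G] {m : ℕ} [NeZero m] (φ : G →* Multiplicative (ZMod m))
    (a b : G) (ν : ZMod m) : a ^ ν.val * b ∈ φ.ker ↔ ν * (φ a).toAdd + (φ b).toAdd = 0 := by
  rw [MonoidHom.mem_ker, ← toAdd_eq_zero, map_mul, map_pow, toAdd_mul, toAdd_pow, nsmul_eq_mul,
    ZMod.natCast_zmod_val]

end

theorem cyclicQuotient_subgroups_form_general (p n : ℕ) (hp : p.Prime)
    (a b : Multiplicative (ZMod (p ^ n) × ZMod (p ^ n)))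
    (ha : a = Multiplicative.ofAdd ((1 : ZMod (p ^ n)), (0 : ZMod (p ^ n))))
    (hb : b = Multiplicative.ofAdd ((0 : ZMod (p ^ n)), (1 : ZMod (p ^ n))))
    (S : Subgroup (Multiplicative (ZMod (p ^ n) × ZMod (p ^ n))))
    (hcyc : IsCyclic (Multiplicative (ZMod (p ^ n) × ZMod (p ^ n)) ⧸ S))
    (s : ℕ) (hs1 : 1 ≤ s) (hidx : S.index = p ^ s) :
    (∃ ν : ℕ, ν < p ^ s ∧ S = Subgroup.closure {a ^ ν * b, a ^ (p ^ s)}) ∨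
    (∃ μ : ℕ, μ < p ^ s ∧ p ∣ μ ∧ S = Subgroup.closure {a * b ^ μ, b ^ (p ^ s)}) := by
  have hs : s ≠ 0 := by omega
  have : NeZero (p ^ s) := ⟨pow_ne_zero s hp.ne_zero⟩
  have := ZMod.isLocalRing_prime_pow hp hs
  have hab : Subgroup.closure {a, b} = ⊤ :=
    ha ▸ hb ▸ closure_ofAdd_one_zero_zero_one_eq_top (p ^ n)
  obtain ⟨φ, hφ, rfl⟩ := exists_surjective_ker_eq_of_isCyclic S hcyc hidx
  obtain ⟨g, hg, hunit⟩ := exists_isUnit_toAdd_of_closure_eq_top hφ hab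
  set A := (φ a).toAdd
  set B := (φ b).toAdd
  by_cases hA : IsUnit A
  · refine .inl ⟨(-(B * A⁻¹)).val, ZMod.val_lt _, ?_⟩
    refine eq_closure_pow_mul_of_mem hab hidx (NeZero.ne _) ?_
    rw [pow_val_mul_mem_ker_iff]
    linear_combination (-B) * ZMod.inv_mul_of_unit A hA
  · have hB : IsUnit B := by
      rcases hg with rfl | rfl
      exacts [absurd hunit hA, hunit]
    refine .inr ⟨(-(A * B⁻¹)).val, ZMod.val_lt _, ?_, ?_⟩
    · rw [← ZMod.not_isUnit_iff_dvd_val hp hs]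
      refine fun hμ => hA ?_
      rw [show A = -(-(A * B⁻¹)) * B by linear_combination (-A) * ZMod.inv_mul_of_unit B hB]
      exact hμ.neg.mul hB
    · rw [mul_comm a]
      refine eq_closure_pow_mul_of_mem (Set.pair_comm a b ▸ hab) hidx (NeZero.ne _) ?_
      rw [pow_val_mul_mem_ker_iff]
      linear_combination (-A) * ZMod.inv_mul_of_unit B hB

theorem cyclicQuotient_subgroups_form (p n : ℕ) (hp : p.Prime) (hn : 1 ≤ n)
    (a b : Multiplicative (ZMod (p ^ n) × ZMod (p ^ n)))
    (ha : a = Multiplicative.ofAdd ((1 : ZMod (p ^ n)), (0 : ZMod (p ^ n))))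
    (hb : b = Multiplicative.ofAdd ((0 : ZMod (p ^ n)), (1 : ZMod (p ^ n))))
    (S : Subgroup (Multiplicative (ZMod (p ^ n) × ZMod (p ^ n))))
    (hcyc : IsCyclic (Multiplicative (ZMod (p ^ n) × ZMod (p ^ n)) ⧸ S))
    (s : ℕ) (hs1 : 1 ≤ s) (hsn : s ≤ n) (hidx : S.index = p ^ s) :
    (∃ ν : ℕ, ν < p ^ s ∧ S = Subgroup.closure {a ^ ν * b, a ^ (p ^ s)}) ∨
    (∃ μ : ℕ, μ < p ^ s ∧ p ∣ μ ∧ S = Subgroup.closure {a * b ^ μ, b ^ (p ^ s)}) :=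
  cyclicQuotient_subgroups_form_general p n hp a b ha hb S hcyc s hs1 hidx
end

section
/- Let p be an odd prime, n ≥ 3, and M_n(p) as above. If h = a^k b^l with gcd(p, k) = 1 and gcd(p, l) = 1, then h^p = a^{kp}. In particular, ⟨h⟩ contains ⟨a^p⟩ and ⟨h⟩ has index p in M_n(p). -/
/-- Relations for the modular maximal-cyclic group
`M_n(p) = ⟨a, b ∣ a^(p^(n-1)) = 1, b^p = 1, b⁻¹ a b = a^(p^(n-2)+1)⟩`. -/
def Mrels (p n : ℕ) : Set (FreeGroup (Fin 2)) :=
  {FreeGroup.of 0 ^ p ^ (n - 1), FreeGroup.of 1 ^ p,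
    (FreeGroup.of 1)⁻¹ * FreeGroup.of 0 * FreeGroup.of 1 *
      (FreeGroup.of 0 ^ (p ^ (n - 2) + 1))⁻¹}

/-- The modular maximal-cyclic group `M_n(p)`, as a presented group. -/
abbrev Mgrp (p n : ℕ) := PresentedGroup (Mrels p n)

/-- The generator `a` of `M_n(p)`. -/
def Ma (p n : ℕ) : Mgrp p n := PresentedGroup.of 0

/-- The generator `b` of `M_n(p)`. -/
def Mb (p n : ℕ) : Mgrp p n := PresentedGroup.of 1

/-!
Since `b⁻¹ a^p b = a^(p (p^(n-2) + 1)) = a^p`, the element `a^p` is central, hence so is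
`⁅a, b⁆ = a^(p^(n-2))`, whose order divides `p`. When `⁅x, y⁆` commutes with `x` and `y`,
`(x y)^m = x^m y^m ⁅y, x⁆^(m choose 2)`; for `m = p` odd, `p ∣ p choose 2`, and this gives
`h^p = a^(kp)`. As `k` is prime to the order of `a^p`, `a^p` is a power of `h^p`.
Every subgroup containing `a^p` contains the commutator subgroup and is therefore normal. The
quotient by `⟨h⟩` is cyclic, generated by the image of `a` (as `p ∤ l`, the image of `b` is a
power of it), and that image has order `p`: `a^p ∈ ⟨h⟩`, while the homomorphism `a ↦ l, b ↦ -k`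
onto `ℤ/p` kills `h` but not `a`.
-/

open Subgroup
open scoped commutatorElement

section GroupTheory

variable {G G' : Type*} [Group G] [Group G'] {x y : G}

theorem commutatorElement_pow_left (hx : Commute x ⁅x, y⁆) (i : ℕ) :
    ⁅x ^ i, y⁆ = ⁅x, y⁆ ^ i := by
  induction i with
  | zero => simp
  | succ i ih =>
    rw [pow_succ', commutatorElement_mul_left_eq_conj_mul, ih, (hx.pow_right i).eq,
      mul_inv_cancel_right, pow_succ]

theorem commutatorElement_pow_right (hy : Commute y ⁅x, y⁆) (j : ℕ) :
    ⁅x, y ^ j⁆ = ⁅x, y⁆ ^ j := by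
  induction j with
  | zero => simp
  | succ j ih =>
    rw [pow_succ, commutatorElement_mul_right_eq_mul_conj, ih, mul_assoc _ (y ^ j),
      (hy.pow_left j).eq, ← mul_assoc, mul_inv_cancel_right, pow_succ]

theorem commutatorElement_pow_pow (hx : Commute x ⁅x, y⁆) (hy : Commute y ⁅x, y⁆)
    (i j : ℕ) :
    ⁅x ^ i, y ^ j⁆ = ⁅x, y⁆ ^ (i * j) := by
  have hx' : Commute x ⁅x, y ^ j⁆ := by
    rw [commutatorElement_pow_right hy]
    exact hx.pow_right j
  rw [commutatorElement_pow_left hx', commutatorElement_pow_right hy, ← pow_mul, mul_comm]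

theorem mul_pow_of_commute_commutatorElement (hx : Commute x ⁅x, y⁆) (hy : Commute y ⁅x, y⁆)
    (m : ℕ) : (x * y) ^ m = x ^ m * y ^ m * ⁅y, x⁆ ^ m.choose 2 := by
  have hdx : Commute ⁅y, x⁆ x := by rw [← commutatorElement_inv]; exact hx.symm.inv_left
  have hdy : Commute ⁅y, x⁆ y := by rw [← commutatorElement_inv]; exact hy.symm.inv_left
  induction m with
  | zero => simp
  | succ m ih =>
    have hyx : y ^ m * x = ⁅y, x⁆ ^ m * (x * y ^ m) := by
      rw [← commutatorElement_inv, inv_pow, ← commutatorElement_pow_right hy,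
        commutatorElement_inv, commutatorElement_def]
      group
    calc (x * y) ^ (m + 1) = x ^ m * (y ^ m * x) * (y * ⁅y, x⁆ ^ m.choose 2) := by
          rw [pow_succ, ih, mul_assoc _ _ (x * y), ((hdx.mul_right hdy).pow_left _).eq]
          simp only [mul_assoc]
      _ = x ^ (m + 1) * y ^ (m + 1) * ⁅y, x⁆ ^ (m + 1).choose 2 := by
          rw [hyx, ((hdx.mul_right (hdy.pow_right m)).pow_left m).eq, Nat.choose_succ_succ',
            Nat.choose_one_right, pow_add ⁅y, x⁆, pow_succ x, pow_succ y]
          simp only [mul_assoc]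
          rw [← mul_assoc _ y, (hdy.pow_left m).eq, mul_assoc]

theorem mem_zpowers_pow_of_pow_eq_one {k m : ℕ} (hx : x ^ m = 1) (hk : k.Coprime m) :
    x ∈ zpowers (x ^ k) :=
  mem_zpowers_pow_iff.mpr (hk.coprime_dvd_right (orderOf_dvd_of_pow_eq_one hx))

theorem Subgroup.normal_of_le_center {H : Subgroup G} (hH : H ≤ center G) : H.Normal :=
  ⟨fun h hh g => by rwa [mem_center_iff.mp (hH hh) g, mul_inv_cancel_right]⟩

theorem closure_pair_map_eq_top {f : G →* G'} (hf : Function.Surjective f)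
    (hgen : closure {x, y} = ⊤) : closure {f x, f y} = ⊤ := by
  rw [← Set.image_pair, ← MonoidHom.map_closure, hgen, map_top_of_surjective _ hf]

theorem commutator_le_of_closure_pair_eq_top {N : Subgroup G} [N.Normal]
    (hgen : closure {x, y} = ⊤) (hxy : ⁅x, y⁆ ∈ N) : commutator G ≤ N := by
  rw [← Normal.quotient_commutative_iff_commutator_le, ← center_eq_top_iff]
  have hcomm : (x : G ⧸ N) * y = y * x := by
    rw [← commutatorElement_eq_one_iff_mul_comm]
    exact (map_commutatorElement (QuotientGroup.mk' N) x y).symm.trans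
      ((QuotientGroup.eq_one_iff _).mpr hxy)
  have htop := closure_pair_map_eq_top (QuotientGroup.mk'_surjective N) hgen
  rw [eq_top_iff, ← htop, closure_le, center_eq_iInf htop]
  simpa [Set.insert_subset_iff, mem_centralizer_singleton_iff] using ⟨hcomm.symm, hcomm⟩

end GroupTheory

namespace Mgrp

variable {p n : ℕ}

theorem Ma_pow_eq_one : Ma p n ^ p ^ (n - 1) = 1 :=
  PresentedGroup.one_of_mem (by simp [Mrels])

theorem Mb_pow_eq_one : Mb p n ^ p = 1 :=
  PresentedGroup.one_of_mem (by simp [Mrels])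

theorem inv_Mb_mul_Ma_mul_Mb : (Mb p n)⁻¹ * Ma p n * Mb p n = Ma p n ^ (p ^ (n - 2) + 1) :=
  mul_inv_eq_one.mp (PresentedGroup.one_of_mem (by simp [Mrels]))

theorem closure_Ma_Mb : closure {Ma p n, Mb p n} = ⊤ := by
  rw [eq_top_iff, ← PresentedGroup.closure_range_of, closure_le]
  rintro _ ⟨i, rfl⟩
  fin_cases i
  · exact subset_closure (Set.mem_insert _ _)
  · exact subset_closure (Set.mem_insert_of_mem _ rfl)

theorem Ma_pow_mem_center (hn : 2 ≤ n) : Ma p n ^ p ∈ center (Mgrp p n) := by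
  have hb : Mb p n * Ma p n ^ p = Ma p n ^ p * Mb p n := by
    have hconj : (Mb p n)⁻¹ * Ma p n ^ p * Mb p n = Ma p n ^ p := by
      calc (Mb p n)⁻¹ * Ma p n ^ p * Mb p n = ((Mb p n)⁻¹ * Ma p n * Mb p n) ^ p := by
            simpa using (conj_pow (a := (Mb p n)⁻¹) (b := Ma p n) (i := p)).symm
        _ = Ma p n ^ p ^ (n - 1) * Ma p n ^ p := by
            rw [inv_Mb_mul_Ma_mul_Mb, ← pow_mul, ← pow_add, add_mul, one_mul, ← pow_succ,
              show n - 2 + 1 = n - 1 by omega]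
        _ = Ma p n ^ p := by rw [Ma_pow_eq_one, one_mul]
    nth_rewrite 1 [← hconj]
    group
  rw [center_eq_iInf closure_Ma_Mb]
  simp [mem_centralizer_singleton_iff, hb, ← pow_succ, ← pow_succ']

theorem Ma_pow_pow_eq_one (hn : 2 ≤ n) : (Ma p n ^ p) ^ p ^ (n - 2) = 1 := by
  rw [← pow_mul, ← pow_succ', show n - 2 + 1 = n - 1 by omega, Ma_pow_eq_one]

theorem Ma_pow_pow_sub_two_eq (hn : 3 ≤ n) :
    Ma p n ^ p ^ (n - 2) = (Ma p n ^ p) ^ p ^ (n - 3) := by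
  rw [← pow_mul, ← pow_succ', show n - 3 + 1 = n - 2 by omega]

theorem commutatorElement_Ma_Mb (hn : 3 ≤ n) : ⁅Ma p n, Mb p n⁆ = Ma p n ^ p ^ (n - 2) := by
  have hab : Ma p n * Mb p n = Mb p n * (Ma p n ^ p ^ (n - 2) * Ma p n) := by
    rw [← pow_succ, ← inv_Mb_mul_Ma_mul_Mb]
    group
  have hcentral : Ma p n ^ p ^ (n - 2) ∈ center (Mgrp p n) := by
    rw [Ma_pow_pow_sub_two_eq hn]
    exact pow_mem (Ma_pow_mem_center (by omega)) _
  rw [commutatorElement_def, hab, ← mul_assoc, mul_inv_cancel_right,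
    mem_center_iff.mp hcentral, mul_inv_cancel_right]

theorem commutatorElement_Ma_Mb_mem_center (hn : 3 ≤ n) :
    ⁅Ma p n, Mb p n⁆ ∈ center (Mgrp p n) := by
  rw [commutatorElement_Ma_Mb hn, Ma_pow_pow_sub_two_eq hn]
  exact pow_mem (Ma_pow_mem_center (by omega)) _

theorem commutatorElement_Ma_Mb_pow_eq_one (hn : 3 ≤ n) : ⁅Ma p n, Mb p n⁆ ^ p = 1 := by
  rw [commutatorElement_Ma_Mb hn, ← pow_mul, mul_comm, pow_mul, Ma_pow_pow_eq_one (by omega)]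

theorem commutator_le_zpowers_Ma_pow (hn : 3 ≤ n) :
    commutator (Mgrp p n) ≤ zpowers (Ma p n ^ p) :=
  have : (zpowers (Ma p n ^ p)).Normal :=
    normal_of_le_center (zpowers_le.mpr (Ma_pow_mem_center (by omega)))
  commutator_le_of_closure_pair_eq_top closure_Ma_Mb (by
    rw [commutatorElement_Ma_Mb hn, Ma_pow_pow_sub_two_eq hn]
    exact npow_mem_zpowers _ _)

theorem normal_of_Ma_pow_mem (hn : 3 ≤ n) {H : Subgroup (Mgrp p n)} (hH : Ma p n ^ p ∈ H) :
    H.Normal :=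
  commutator_top_left_le_iff.mp <| (commutator_mono le_top le_top).trans <|
    (commutator_le_zpowers_Ma_pow hn).trans (zpowers_le.mpr hH)

theorem Ma_pow_mul_Mb_pow_pow (hp : p.Prime) (hodd : Odd p) (hn : 3 ≤ n) (k l : ℕ) :
    (Ma p n ^ k * Mb p n ^ l) ^ p = Ma p n ^ (k * p) := by
  have hc := commutatorElement_Ma_Mb_mem_center (p := p) hn
  have hkl : ⁅Ma p n ^ k, Mb p n ^ l⁆ = ⁅Ma p n, Mb p n⁆ ^ (k * l) :=
    commutatorElement_pow_pow (mem_center_iff.mp hc _) (mem_center_iff.mp hc _) k l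
  have hc' : ⁅Ma p n ^ k, Mb p n ^ l⁆ ∈ center (Mgrp p n) := hkl ▸ pow_mem hc _
  obtain ⟨m, hm⟩ : p ∣ p.choose 2 := by
    refine hp.dvd_choose_self two_ne_zero ?_
    have := hp.two_le
    rcases hodd with ⟨j, rfl⟩
    omega
  have hcp : ⁅Mb p n ^ l, Ma p n ^ k⁆ ^ p.choose 2 = 1 := by
    rw [← commutatorElement_inv, hkl, hm, inv_pow, ← pow_mul, mul_left_comm, pow_mul,
      commutatorElement_Ma_Mb_pow_eq_one hn, one_pow, inv_one]
  rw [mul_pow_of_commute_commutatorElement (mem_center_iff.mp hc' _) (mem_center_iff.mp hc' _),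
    hcp, mul_one, ← pow_mul (Mb p n), mul_comm l p, pow_mul (Mb p n), Mb_pow_eq_one, one_pow,
    mul_one, pow_mul]

theorem Ma_pow_mem_zpowers (hp : p.Prime) (hodd : Odd p) (hn : 3 ≤ n) {k : ℕ}
    (hk : Nat.gcd p k = 1) (l : ℕ) : Ma p n ^ p ∈ zpowers (Ma p n ^ k * Mb p n ^ l) := by
  refine zpowers_le.mpr ?_ (mem_zpowers_pow_of_pow_eq_one (Ma_pow_pow_eq_one (by omega))
    (Nat.Coprime.pow_right _ (Nat.coprime_comm.mp hk)))
  rw [← pow_mul, mul_comm, ← Ma_pow_mul_Mb_pow_pow hp hodd hn]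
  exact npow_mem_zpowers _ _

theorem exists_hom_multiplicative_zmod (hn : 3 ≤ n) (u v : ZMod p) :
    ∃ φ : Mgrp p n →* Multiplicative (ZMod p),
      φ (Ma p n) = .ofAdd u ∧ φ (Mb p n) = .ofAdd v := by
  have hrels : ∀ r ∈ Mrels p n, FreeGroup.lift ![Multiplicative.ofAdd u, .ofAdd v] r = 1 := by
    rintro r (rfl | rfl | rfl) <;>
      simp [← ofAdd_nsmul, ← ofAdd_neg, ← ofAdd_add, ← ofAdd_zero, show n - 1 ≠ 0 by omega,
        show n - 2 ≠ 0 by omega]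
  exact ⟨PresentedGroup.toGroup hrels, PresentedGroup.toGroup.of hrels,
    PresentedGroup.toGroup.of hrels⟩

theorem Ma_not_mem_zpowers (hp : p.Prime) (hn : 3 ≤ n) (k : ℕ) {l : ℕ}
    (hl : Nat.gcd p l = 1) :
    Ma p n ∉ zpowers (Ma p n ^ k * Mb p n ^ l) := by
  obtain ⟨φ, ha, hb⟩ := exists_hom_multiplicative_zmod (p := p) hn l (-k)
  have hker : Ma p n ^ k * Mb p n ^ l ∈ φ.ker := by
    rw [MonoidHom.mem_ker, map_mul, map_pow, map_pow, ha, hb, ← ofAdd_nsmul, ← ofAdd_nsmul,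
      ← ofAdd_add, nsmul_eq_mul, nsmul_eq_mul, mul_neg, mul_comm, add_neg_cancel, ofAdd_zero]
  intro hmem
  have : (l : ZMod p) = 0 := by
    simpa [ha] using zpowers_le.mpr hker hmem
  exact (Nat.Prime.coprime_iff_not_dvd hp).mp hl ((ZMod.natCast_eq_zero_iff _ _).mp this)

theorem index_zpowers_Ma_pow_mul_Mb_pow (hp : p.Prime) (hn : 3 ≤ n) {k l : ℕ}
    (hl : Nat.gcd p l = 1) (hap : Ma p n ^ p ∈ zpowers (Ma p n ^ k * Mb p n ^ l)) :
    (zpowers (Ma p n ^ k * Mb p n ^ l)).index = p := by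
  set H := zpowers (Ma p n ^ k * Mb p n ^ l)
  have := normal_of_Ma_pow_mem hn hap
  have ha : orderOf (Ma p n : Mgrp p n ⧸ H) = p := by
    have := Fact.mk hp
    refine orderOf_eq_prime ?_ ?_
    · rw [← QuotientGroup.mk_pow, QuotientGroup.eq_one_iff]
      exact hap
    · rw [Ne, QuotientGroup.eq_one_iff]
      exact Ma_not_mem_zpowers hp hn k hl
  have hb : (Mb p n : Mgrp p n ⧸ H) ∈ zpowers (Ma p n : Mgrp p n ⧸ H) := by
    have hbl : (Mb p n : Mgrp p n ⧸ H) ^ l = ((Ma p n : Mgrp p n ⧸ H) ^ k)⁻¹ := by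
      refine eq_inv_of_mul_eq_one_right ?_
      rw [← QuotientGroup.mk_pow, ← QuotientGroup.mk_pow, ← QuotientGroup.mk_mul,
        QuotientGroup.eq_one_iff]
      exact mem_zpowers _
    have hbp : (Mb p n : Mgrp p n ⧸ H) ^ p = 1 := by
      rw [← QuotientGroup.mk_pow, Mb_pow_eq_one, QuotientGroup.mk_one]
    refine zpowers_le.mpr ?_ (mem_zpowers_pow_of_pow_eq_one hbp (Nat.coprime_comm.mp hl))
    rw [hbl]
    exact inv_mem (npow_mem_zpowers _ _)
  have hcyc : ∀ q : Mgrp p n ⧸ H, q ∈ zpowers (Ma p n : Mgrp p n ⧸ H) := by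
    have htop := closure_pair_map_eq_top (QuotientGroup.mk'_surjective H)
      (closure_Ma_Mb (p := p) (n := n))
    simp only [QuotientGroup.mk'_apply] at htop
    intro q
    refine (closure_le _).mpr ?_ (htop ▸ mem_top q)
    exact Set.insert_subset_iff.mpr ⟨mem_zpowers _, Set.singleton_subset_iff.mpr hb⟩
  rw [index_eq_card, ← orderOf_eq_card_of_forall_mem_zpowers hcyc, ha]

end Mgrp

theorem Mgrp_pow_p_of_generator (p n : ℕ) (hp : p.Prime) (hodd : Odd p) (hn : 3 ≤ n)
    (k l : ℕ) (hk : Nat.gcd p k = 1) (hl : Nat.gcd p l = 1)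
    (h : Mgrp p n) (hh : h = Ma p n ^ k * Mb p n ^ l) :
    h ^ p = Ma p n ^ (k * p) ∧
      Subgroup.zpowers (Ma p n ^ p) ≤ Subgroup.zpowers h ∧
      (Subgroup.zpowers h).index = p := by
  subst hh
  have hap := Mgrp.Ma_pow_mem_zpowers hp hodd hn hk l
  exact ⟨Mgrp.Ma_pow_mul_Mb_pow_pow hp hodd hn k l, zpowers_le.mpr hap,
    Mgrp.index_zpowers_Ma_pow_mul_Mb_pow hp hn hl hap⟩
end
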